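/- arXiv:2408.15692 — 2 statements merged into one kernel-verified Lean document; each statement's English description precedes it below -/
import Mathlib

section
/- Let 𝔉 be an iterated graph system satisfying Assumption (GR). Then: (i) every path in a replacement graph containing at most two vertices, and every non-collapsing path, is an intersection path; (ii) if θ is an intersection path in G_m and {θ_n}_{n∈ℕ} is a witnessing sequence of paths, then θ_n is non-collapsing for all sufficiently large n; (iii) 𝔉 is of bounded geometry if and only if sup_θ diam_{G_n}(θ) < ∞, where the supremum is over all non-collapsing paths θ in all replacement graphs G_n. -/
namespace IGSP

/-- An iterated graph system: a finite connected oriented graph `G₁ = (S, E)`, a set of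
types `T` with a surjective typing map on edges, and nonempty gluing rules `I_t ⊆ S × S`. -/
structure System (S T : Type) where
  E : S → S → Prop
  not_both : ∀ x y : S, E x y → ¬ E y x
  irrefl : ∀ x : S, ¬ E x x
  conn : ∀ x y : S, Relation.ReflTransGen (fun a b => E a b ∨ E b a) x y
  typ : S → S → T
  typ_surj : ∀ t : T, ∃ x y, E x y ∧ typ x y = t
  glue : T → S → S → Prop
  glue_nonempty : ∀ t : T, ∃ x y, glue t x y

variable {S T : Type}

/-- Words of length `m` over the symbol set `S`. -/
abbrev Word (S : Type) (m : ℕ) := Fin m → S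

open Classical in
/-- The replacement graphs together with their typing functions, defined by recursion on
the length of words: `G₁ = (S,E)` and an oriented edge `(w,v) ∈ E_{m+1}` holds iff either
the length-`m` prefixes agree and the last symbols form an edge of `G₁`, or the prefixes
form an edge of `E_m` and the last symbols belong to the gluing rule of its type. -/
noncomputable def replData [Nonempty T] (F : System S T) :
    (L : ℕ) → (Word S L → Word S L → Prop) × (Word S L → Word S L → T)
  | 0 => ⟨fun _ _ => False, fun _ _ => Classical.arbitrary T⟩
  | 1 => ⟨fun w v => F.E (w 0) (v 0), fun w v => F.typ (w 0) (v 0)⟩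
  | L + 2 =>
      ⟨fun w v =>
        (Fin.init w = Fin.init v ∧ F.E (w (Fin.last (L + 1))) (v (Fin.last (L + 1)))) ∨
        ((replData F (L + 1)).1 (Fin.init w) (Fin.init v) ∧
          F.glue ((replData F (L + 1)).2 (Fin.init w) (Fin.init v))
            (w (Fin.last (L + 1))) (v (Fin.last (L + 1)))),
       fun w v =>
        if Fin.init w = Fin.init v then F.typ (w (Fin.last (L + 1))) (v (Fin.last (L + 1)))
        else (replData F (L + 1)).2 (Fin.init w) (Fin.init v)⟩

/-- The oriented edge relation of the replacement graph on words of length `L`. -/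
def edge [Nonempty T] (F : System S T) (L : ℕ) (w v : Word S L) : Prop :=
  (replData F L).1 w v

/-- The typing function of the replacement graph on words of length `L`. -/
noncomputable def etyp [Nonempty T] (F : System S T) (L : ℕ) (w v : Word S L) : T :=
  (replData F L).2 w v

/-- The unoriented edge ("{w,v} ∈ E_L") relation. -/
def adjW [Nonempty T] (F : System S T) (L : ℕ) (w v : Word S L) : Prop :=
  edge F L w v ∨ edge F L v w

/-- The replacement graph `G_L` as a simple graph on words of length `L`. -/
noncomputable def replGraph [Nonempty T] (F : System S T) (L : ℕ) : SimpleGraph (Word S L) where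
  Adj w v := w ≠ v ∧ adjW F L w v
  symm := by
    constructor
    intro w v h
    exact ⟨Ne.symm h.1, Or.symm h.2⟩
  loopless := by
    constructor
    intro w h
    exact h.1 rfl

/-- The degree of a word `w` in the replacement graph `G_L`: the number of `v` with
`{w,v} ∈ E_L`. -/
noncomputable def degGm [Nonempty T] (F : System S T) (L : ℕ) (w : Word S L) : ℕ :=
  {v : Word S L | adjW F L w v}.ncard

/-- `I_{t,+}`, the set of symbols occurring as the first coordinate of the gluing rule. -/
def Iplus (F : System S T) (t : T) : Set S := {a | ∃ b, F.glue t a b}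

/-- `I_{t,-}`, the set of symbols occurring as the second coordinate of the gluing rule. -/
def Iminus (F : System S T) (t : T) : Set S := {b | ∃ a, F.glue t a b}

/-- `I_{t,★}` where the orientation `★` is encoded by a boolean: `true = +`, `false = -`. -/
def Iset (F : System S T) (t : T) : Bool → Set S
  | true => Iplus F t
  | false => Iminus F t

/-- `I_{t,★}^{(m)} = (I_{t,★})^m ⊆ W_m`. -/
def IsetW (F : System S T) (t : T) (b : Bool) (m : ℕ) : Set (Word S m) :=
  {w | ∀ i, w i ∈ Iset F t b}

/-- The boundary `∂G_m = ⋃_{(t,★)} I_{t,★}^{(m)}`. -/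
def boundaryW (F : System S T) (m : ℕ) : Set (Word S m) :=
  ⋃ (t : T) (b : Bool), IsetW F t b m

/-- (GR1): every symbol has at most one gluing partner for each type and orientation. -/
def GR1 (F : System S T) : Prop :=
  ∀ (t : T) (s : S), {b | F.glue t s b}.Subsingleton ∧ {a | F.glue t a s}.Subsingleton

/-- (GR2): for no type, orientation and symbol are the gluing-partner count and the
corresponding oriented degree in `G₁` simultaneously nonzero. -/
def GR2 (F : System S T) : Prop :=
  ∀ (t : T) (s : S),
    ¬ ((∃ b, F.glue t s b) ∧ ∃ b, F.E s b ∧ F.typ s b = t) ∧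
    ¬ ((∃ a, F.glue t a s) ∧ ∃ a, F.E a s ∧ F.typ a s = t)

/-- (GR3): `I_{t,-} ∩ I_{t,+} = ∅` for every type `t`. -/
def GR3 (F : System S T) : Prop := ∀ t : T, Iminus F t ∩ Iplus F t = ∅

/-- Assumption (GR). -/
def GR (F : System S T) : Prop := GR1 F ∧ GR2 F ∧ GR3 F

/-- A path in the replacement graph `G_L`: a nonempty list of words with consecutive
entries joined by an edge. -/
def IsPath [Nonempty T] (F : System S T) (L : ℕ) (θ : List (Word S L)) : Prop :=
  θ ≠ [] ∧ θ.Chain' (adjW F L)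

open Classical in
/-- The projection `π_{L,k}` of a path: take length-`k` prefixes and remove consecutive
repetitions. -/
noncomputable def proj {k L : ℕ} (h : k ≤ L) (θ : List (Word S L)) : List (Word S k) :=
  (θ.map fun w => fun i => w (Fin.castLE h i)).destutter (· ≠ ·)

/-- An intersection path in `G_{m+1}`: a path admitting a compatible sequence of paths at
all levels with uniformly bounded lengths. -/
def IsIntersectionPath [Nonempty T] (F : System S T) (m : ℕ) (θ : List (Word S (m + 1))) :
    Prop :=
  IsPath F (m + 1) θ ∧
  ∃ Θ : (n : ℕ) → List (Word S (n + 1)),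
    Θ m = θ ∧ (∀ n, IsPath F (n + 1) (Θ n)) ∧
    (∀ (k n : ℕ) (h : k ≤ n), proj (Nat.succ_le_succ h) (Θ n) = Θ k) ∧
    ∃ C : ℕ, ∀ n, (Θ n).length ≤ C

/-- The fundamental neighbourhood `𝒩(w)`. -/
def nbhd [Nonempty T] (F : System S T) (m : ℕ) (w : Word S (m + 1)) :
    Set (Word S (m + 1)) :=
  {v | ∃ θ, IsIntersectionPath F m θ ∧ θ.head? = some w ∧ θ.getLast? = some v}

/-- Bounded geometry: the diameters of fundamental neighbourhoods are uniformly bounded. -/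
def BoundedGeometry [Nonempty T] (F : System S T) : Prop :=
  ∃ D : ℕ, ∀ (m : ℕ) (w : Word S (m + 1)), ∀ v₁ ∈ nbhd F m w, ∀ v₂ ∈ nbhd F m w,
    (replGraph F (m + 1)).dist v₁ v₂ ≤ D

/-- `|w ∧ v| < L` for words of length `L`: the words differ at some index below the last. -/
def ncRel {L : ℕ} (w v : Word S L) : Prop := ∃ j : Fin L, (j : ℕ) + 1 < L ∧ w j ≠ v j

/-- A non-collapsing path: consecutive vertices satisfy `|w ∧ v| < L`. -/
def NonCollapsing {L : ℕ} (θ : List (Word S L)) : Prop := θ.Chain' ncRel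

/-- A mapping between iterated graph systems. -/
structure Hom {S T S' T' : Type} (F : System S T) (F' : System S' T') where
  toFun : S → S'
  map_edge : ∀ x y, (F.E x y ∨ F.E y x) →
    (toFun x = toFun y ∨ F'.E (toFun x) (toFun y) ∨ F'.E (toFun y) (toFun x))
  glue_collapse : ∀ w1 v1, F.E w1 v1 → toFun w1 = toFun v1 →
    ∀ w2 v2, F.glue (F.typ w1 v1) w2 v2 → toFun w2 = toFun v2
  glue_fwd : ∀ w1 v1, F.E w1 v1 → F'.E (toFun w1) (toFun v1) →
    ∀ w2 v2, F.glue (F.typ w1 v1) w2 v2 →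
      F'.glue (F'.typ (toFun w1) (toFun v1)) (toFun w2) (toFun v2)
  glue_rev : ∀ w1 v1, F.E w1 v1 → F'.E (toFun v1) (toFun w1) →
    ∀ w2 v2, F.glue (F.typ w1 v1) w2 v2 →
      F'.glue (F'.typ (toFun v1) (toFun w1)) (toFun v2) (toFun w2)

/-- An isomorphism between iterated graph systems: a pair of mutually inverse mappings. -/
structure Iso {S T S' T' : Type} (F : System S T) (F' : System S' T') where
  hom : Hom F F'
  inv : Hom F' F
  left_inv : ∀ x, inv.toFun (hom.toFun x) = x
  right_inv : ∀ y, hom.toFun (inv.toFun y) = y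

/-- A flipping symmetry of type `t`. -/
def IsFlip (F : System S T) (t : T) (η : Iso F F) : Prop :=
  (∀ w ∈ Iplus F t, F.glue t w (η.hom.toFun w)) ∧
  (∀ v ∈ Iminus F t, F.glue t (η.hom.toFun v) v)

/-- The data of a reflection symmetry of an iterated graph system: an involutive
isomorphism together with the partition `S = C ∪ D ∪ Δ` satisfying (D1)-(D4). -/
structure ReflData (F : System S T) where
  iso : Iso F F
  C : Set S
  D : Set S
  invol : ∀ x, iso.hom.toFun (iso.hom.toFun x) = x
  C_not_fixed : ∀ x ∈ C, iso.hom.toFun x ≠ x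
  D_not_fixed : ∀ x ∈ D, iso.hom.toFun x ≠ x
  CD_disjoint : ∀ x, ¬ (x ∈ C ∧ x ∈ D)
  cover : ∀ x, x ∈ C ∨ x ∈ D ∨ iso.hom.toFun x = x
  image_C : iso.hom.toFun '' C = D
  edge_CD : ∀ x ∈ C, ∀ y ∈ D, (F.E x y ∨ F.E y x) → iso.hom.toFun x = y
  D2 : ∀ w1 v1, F.E w1 v1 → iso.hom.toFun v1 = v1 →
    (w1 ∈ C → Iminus F (F.typ w1 v1) ⊆ C ∪ {x | iso.hom.toFun x = x}) ∧
    (w1 ∈ D → Iminus F (F.typ w1 v1) ⊆ D ∪ {x | iso.hom.toFun x = x})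
  D3 : ∀ w1 v1, F.E w1 v1 → iso.hom.toFun w1 = w1 →
    (v1 ∈ C → Iplus F (F.typ w1 v1) ⊆ C ∪ {x | iso.hom.toFun x = x}) ∧
    (v1 ∈ D → Iplus F (F.typ w1 v1) ⊆ D ∪ {x | iso.hom.toFun x = x})
  D4 : ∀ w1 v1, F.E w1 v1 → iso.hom.toFun w1 = w1 → iso.hom.toFun v1 = v1 →
    ∀ w2 v2, F.glue (F.typ w1 v1) w2 v2 →
      (w2 ∈ C ∧ v2 ∈ C) ∨ (w2 ∈ D ∧ v2 ∈ D) ∨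
      (iso.hom.toFun w2 = w2 ∧ iso.hom.toFun v2 = v2)

/-- (D5): a reflection symmetry. -/
def IsRefl {F : System S T} (R : ReflData F) : Prop :=
  ∀ w1 v1, F.E w1 v1 → w1 ∈ R.C → v1 ∈ R.D →
    ∀ w2 v2, F.glue (F.typ w1 v1) w2 v2 → R.iso.hom.toFun w2 = v2

/-- (D5*): a separative reflection symmetry. -/
def IsSepRefl {F : System S T} (R : ReflData F) : Prop :=
  ∀ x ∈ R.C, ∀ y ∈ R.D, ¬ (F.E x y ∨ F.E y x)

/-- The coordinatewise action of a reflection symmetry on words. -/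
def wordMap {F : System S T} (R : ReflData F) {m : ℕ} (w : Word S m) : Word S m :=
  fun i => R.iso.hom.toFun (w i)

/-- The lifted set `C_α^{(m)}`: words whose first non-fixed coordinate lies in `C`. -/
def liftC {F : System S T} (R : ReflData F) (m : ℕ) : Set (Word S m) :=
  {w | ∃ k : Fin m, w k ∈ R.C ∧ ∀ j < k, R.iso.hom.toFun (w j) = w j}

/-- The lifted set `D_α^{(m)}`: words whose first non-fixed coordinate lies in `D`. -/
def liftD {F : System S T} (R : ReflData F) (m : ℕ) : Set (Word S m) :=
  {w | ∃ k : Fin m, w k ∈ R.D ∧ ∀ j < k, R.iso.hom.toFun (w j) = w j}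

end IGSP
namespace IGSP

variable {S T : Type}

/-- An antisymmetric function supported on the edges of a graph. -/
def Antisym {V : Type} (G : SimpleGraph V) (Φ : V → V → ℝ) : Prop :=
  (∀ x y, Φ x y = - Φ y x) ∧ ∀ x y, ¬ G.Adj x y → Φ x y = 0

/-- The divergence of `Φ` at a vertex. -/
noncomputable def fdiv {V : Type} (Φ : V → V → ℝ) (x : V) : ℝ := ∑ᶠ y, Φ x y

/-- A flow from `A` to `B`. -/
def IsFlow {V : Type} (G : SimpleGraph V) (A B : Set V) (Φ : V → V → ℝ) : Prop :=
  Antisym G Φ ∧ ∀ x, x ∉ A ∪ B → fdiv Φ x = 0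

/-- The total flow `I(Φ) = Σ_{x ∈ A} div Φ (x)`. -/
noncomputable def totalFlow {V : Type} (A : Set V) (Φ : V → V → ℝ) : ℝ :=
  ∑ᶠ x ∈ A, fdiv Φ x

/-- The `q`-energy `E_q(Φ) = Σ_{{x,y} ∈ E} |Φ(x,y)|^q` (each unordered edge counted once). -/
noncomputable def energy {V : Type} (q : ℝ) (Φ : V → V → ℝ) : ℝ :=
  (∑ᶠ x, ∑ᶠ y, |Φ x y| ^ q) / 2

/-- The degree of a vertex of a graph. -/
noncomputable def degOf {V : Type} (G : SimpleGraph V) (x : V) : ℕ := {y | G.Adj x y}.ncard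

/-- The maximal degree of a finite graph. -/
noncomputable def maxDeg {V : Type} [Fintype V] (G : SimpleGraph V) : ℕ :=
  Finset.univ.sup fun x => degOf G x

/-- The diameter of a finite graph (in the shortest-path metric). -/
noncomputable def gdiam {V : Type} [Fintype V] (G : SimpleGraph V) : ℕ :=
  Finset.univ.sup fun pr : V × V => G.dist pr.1 pr.2

/-- The set of vertices of a path. -/
def pathVerts {V : Type} (θ : List V) : Set V := {x | x ∈ θ}

/-- A density is admissible for a path family if it is nonnegative and its sum along
every path of the family is at least 1. -/
def Admissible {V : Type} (Θ : Set (List V)) (ρ : V → ℝ) : Prop :=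
  (∀ x, 0 ≤ ρ x) ∧ ∀ θ ∈ Θ, 1 ≤ ∑ᶠ x ∈ pathVerts θ, ρ x

/-- The discrete (vertex) `p`-modulus of a family of paths. -/
noncomputable def modulus {V : Type} (p : ℝ) (Θ : Set (List V)) : ℝ :=
  sInf {M | ∃ ρ : V → ℝ, Admissible Θ ρ ∧ M = ∑ᶠ x, ρ x ^ p}

/-- The `p`-resistance `E_q(A,B,G)`: infimal `q`-energy of unit flows from `A` to `B`. -/
noncomputable def resistance {V : Type} (q : ℝ) (G : SimpleGraph V) (A B : Set V) : ℝ :=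
  sInf {e | ∃ Φ, IsFlow G A B Φ ∧ totalFlow A Φ = 1 ∧ e = energy q Φ}

/-- The family `Θ_𝔞^{(m)}` of paths in `G_m` from `I_{t₁,★₁}^{(m)}` to `I_{t₂,★₂}^{(m)}`. -/
def ThetaIGS [Nonempty T] (F : System S T) (m : ℕ) (t₁ : T) (b₁ : Bool) (t₂ : T)
    (b₂ : Bool) : Set (List (Word S m)) :=
  {θ | IsPath F m θ ∧ (∃ w ∈ IsetW F t₁ b₁ m, θ.head? = some w) ∧
    ∃ v ∈ IsetW F t₂ b₂ m, θ.getLast? = some v}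

/-- `ℒ^{(m)}`, the collection of sets `I_{t,★}^{(m)}`. -/
def scriptL [Nonempty T] (F : System S T) (m : ℕ) : Set (Set (Word S m)) :=
  {A | ∃ (t : T) (b : Bool), A = IsetW F t b m}

/-- The added vertices `v_L` (for `L ∈ ℒ^{(m)}` and `v ∈ L`) of the graph `G̃_m`. -/
def AddedV [Nonempty T] (F : System S T) (m : ℕ) :=
  {pr : Set (Word S m) × Word S m // pr.1 ∈ scriptL F m ∧ pr.2 ∈ pr.1}

/-- The vertex set of the graph `G̃_m`. -/
def TildeV [Nonempty T] (F : System S T) (m : ℕ) := Word S m ⊕ AddedV F m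

/-- The graph `G̃_m`, obtained from `G_m` by attaching a pendant vertex `v_L` at every
`v ∈ L` for every `L ∈ ℒ^{(m)}`. -/
noncomputable def tildeG [Nonempty T] (F : System S T) (m : ℕ) : SimpleGraph (TildeV F m) where
  Adj x y :=
    match x, y with
    | Sum.inl w, Sum.inl v => w ≠ v ∧ adjW F m w v
    | Sum.inl w, Sum.inr pr => pr.1.2 = w
    | Sum.inr pr, Sum.inl w => pr.1.2 = w
    | Sum.inr _, Sum.inr _ => False
  symm := by
    constructor
    rintro (w | pr) (v | qr) h
    · exact ⟨Ne.symm h.1, Or.symm h.2⟩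
    · exact h
    · exact h
    · exact h.elim
  loopless := by
    constructor
    rintro (w | pr) h
    · exact h.1 rfl
    · exact h

/-- The set `L̃ = {v_L : v ∈ L}` of added vertices over `L`. -/
def tildeSet [Nonempty T] (F : System S T) (m : ℕ) (L : Set (Word S m)) :
    Set (TildeV F m) :=
  {x | ∃ pr : AddedV F m, pr.1.1 = L ∧ x = Sum.inr pr}

/-- A flow basis on `G̃_m`: a family of unit flows between the added vertex sets of all
pairs of distinct members of `ℒ^{(m)}`, satisfying (FB1)–(FB4). -/
structure FlowBasis [Nonempty T] (F : System S T) (ηfam : T → Iso F F) (m : ℕ) where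
  flow : (L₁ L₂ : Set (Word S m)) → L₁ ∈ scriptL F m → L₂ ∈ scriptL F m → L₁ ≠ L₂ →
    TildeV F m → TildeV F m → ℝ
  flow_isFlow : ∀ (L₁ L₂ : Set (Word S m)) (h₁ : L₁ ∈ scriptL F m) (h₂ : L₂ ∈ scriptL F m)
    (hne : L₁ ≠ L₂),
    IsFlow (tildeG F m) (tildeSet F m L₁) (tildeSet F m L₂) (flow L₁ L₂ h₁ h₂ hne)
  flow_unit : ∀ (L₁ L₂ : Set (Word S m)) (h₁ : L₁ ∈ scriptL F m) (h₂ : L₂ ∈ scriptL F m)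
    (hne : L₁ ≠ L₂), totalFlow (tildeSet F m L₁) (flow L₁ L₂ h₁ h₂ hne) = 1
  fb2 : ∀ (L₁ L₂ : Set (Word S m)) (h₁ : L₁ ∈ scriptL F m) (h₂ : L₂ ∈ scriptL F m)
    (hne : L₁ ≠ L₂) (pr : AddedV F m), pr.1.1 ≠ L₁ → pr.1.1 ≠ L₂ →
    flow L₁ L₂ h₁ h₂ hne (Sum.inr pr) (Sum.inl pr.1.2) = 0
  fb3_out : ∀ (L L₁ L₂ : Set (Word S m)) (hL : L ∈ scriptL F m) (h₁ : L₁ ∈ scriptL F m)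
    (h₂ : L₂ ∈ scriptL F m) (hne₁ : L ≠ L₁) (hne₂ : L ≠ L₂) (pr : AddedV F m),
    pr.1.1 = L →
    flow L L₁ hL h₁ hne₁ (Sum.inr pr) (Sum.inl pr.1.2) =
      flow L L₂ hL h₂ hne₂ (Sum.inr pr) (Sum.inl pr.1.2)
  fb3_in : ∀ (L L₁ L₂ : Set (Word S m)) (hL : L ∈ scriptL F m) (h₁ : L₁ ∈ scriptL F m)
    (h₂ : L₂ ∈ scriptL F m) (hne₁ : L₁ ≠ L) (hne₂ : L₂ ≠ L) (pr : AddedV F m),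
    pr.1.1 = L →
    flow L₁ L h₁ hL hne₁ (Sum.inl pr.1.2) (Sum.inr pr) =
      flow L₂ L h₂ hL hne₂ (Sum.inl pr.1.2) (Sum.inr pr)
  fb4_flip : ∀ (t : T) (b : Bool) (h₁ : IsetW F t b m ∈ scriptL F m)
    (h₂ : IsetW F t (!b) m ∈ scriptL F m) (hne : IsetW F t b m ≠ IsetW F t (!b) m)
    (pr qr : AddedV F m), pr.1.1 = IsetW F t b m → qr.1.1 = IsetW F t (!b) m →
    qr.1.2 = (fun i => (ηfam t).hom.toFun (pr.1.2 i)) →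
    flow (IsetW F t b m) (IsetW F t (!b) m) h₁ h₂ hne (Sum.inr pr) (Sum.inl pr.1.2) =
      flow (IsetW F t b m) (IsetW F t (!b) m) h₁ h₂ hne (Sum.inl qr.1.2) (Sum.inr qr)
  fb4_sym : ∀ (t : T) (b : Bool) (h₁ : IsetW F t b m ∈ scriptL F m)
    (h₂ : IsetW F t (!b) m ∈ scriptL F m) (hne : IsetW F t b m ≠ IsetW F t (!b) m)
    (hne' : IsetW F t (!b) m ≠ IsetW F t b m) (pr : AddedV F m),
    pr.1.1 = IsetW F t b m →
    flow (IsetW F t b m) (IsetW F t (!b) m) h₁ h₂ hne (Sum.inr pr) (Sum.inl pr.1.2) =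
      flow (IsetW F t (!b) m) (IsetW F t b m) h₂ h₁ hne' (Sum.inl pr.1.2) (Sum.inr pr)

/-- The `q`-energy of a flow basis: the maximal energy of its members. -/
noncomputable def basisEnergy [Nonempty T] {F : System S T} {ηfam : T → Iso F F} {m : ℕ}
    (q : ℝ) (FB : FlowBasis F ηfam m) : ℝ :=
  sSup {e | ∃ (L₁ L₂ : Set (Word S m)) (h₁ : L₁ ∈ scriptL F m) (h₂ : L₂ ∈ scriptL F m)
    (hne : L₁ ≠ L₂), e = energy q (FB.flow L₁ L₂ h₁ h₂ hne)}

open Classical in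
/-- The twisted flow `T_α(F)` of Proposition "Twist flow". -/
noncomputable def Talpha [Nonempty T] {F : System S T} {m : ℕ} (R : ReflData F)
    (L₁ L₂' : Set (Word S m)) (A : TildeV F m ≃ TildeV F m)
    (Φ : TildeV F m → TildeV F m → ℝ) : TildeV F m → TildeV F m → ℝ := fun x y =>
  if (∃ w, x = Sum.inl w ∧ wordMap R w = w) ∧ (∃ w, y = Sum.inl w ∧ wordMap R w = w) then
    Φ x y
  else if ((∃ w, x = Sum.inl w ∧ w ∈ liftC R m) ∨
        (∃ pr : AddedV F m, x = Sum.inr pr ∧ (pr.1.1 = L₁ ∨ pr.1.1 = L₂'))) ∨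
      ((∃ w, y = Sum.inl w ∧ w ∈ liftC R m) ∨
        (∃ pr : AddedV F m, y = Sum.inr pr ∧ (pr.1.1 = L₁ ∨ pr.1.1 = L₂'))) then
    Φ x y + Φ (A.symm x) (A.symm y)
  else 0

end IGSP
namespace IGSP

/-- The symbol set of the ambient cubical system: `{1,…,L}^d × {1,…,s}` (0-indexed). -/
abbrev CSym (d L s : ℕ) := (Fin d → Fin L) × Fin s

/-- The ambient edge relation of type `t_j`. -/
def ambE {d L s : ℕ} (j : Fin d) (w v : CSym d L s) : Prop :=
  (∀ i, i ≠ j → w.1 i = v.1 i) ∧ (v.1 j : ℕ) = (w.1 j : ℕ) + 1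

/-- The ambient gluing rule of type `t_j`. -/
def ambI {d L s : ℕ} (j : Fin d) (w v : CSym d L s) : Prop :=
  (∀ i, i ≠ j → w.1 i = v.1 i) ∧ (w.1 j : ℕ) = L - 1 ∧ (v.1 j : ℕ) = 0 ∧ w.2 = v.2

/-- A symbol lying on the `j`-axis edge of the cube: all other coordinates extremal
and label `1`. -/
def onAxis {d L s : ℕ} (j : Fin d) (w : CSym d L s) : Prop :=
  (∀ i, i ≠ j → ((w.1 i : ℕ) = 0 ∨ (w.1 i : ℕ) = L - 1)) ∧ (w.2 : ℕ) = 0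

/-- The coordinate reflection `η_j : c_j ↦ L + 1 - c_j`. -/
def etaMap {d L s : ℕ} (j : Fin d) (w : CSym d L s) : CSym d L s :=
  ⟨fun i => if i = j then ⟨L - 1 - (w.1 j : ℕ), by have := (w.1 j).isLt; omega⟩ else w.1 i,
    w.2⟩

/-- The diagonal reflection `α_{j,k}^+` exchanging coordinates `j` and `k`. -/
def swapMap {d L s : ℕ} (j k : Fin d) (w : CSym d L s) : CSym d L s :=
  ⟨fun i => if i = j then w.1 k else if i = k then w.1 j else w.1 i, w.2⟩

/-- The anti-diagonal reflection `α_{j,k}^-`. -/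
def aswapMap {d L s : ℕ} (j k : Fin d) (w : CSym d L s) : CSym d L s :=
  ⟨fun i =>
    if i = j then ⟨L - 1 - (w.1 k : ℕ), by have := (w.1 k).isLt; omega⟩
    else if i = k then ⟨L - 1 - (w.1 j : ℕ), by have := (w.1 j).isLt; omega⟩
    else w.1 i, w.2⟩

/-- A cubical iterated graph system: a sub-system of the ambient system `𝔉(d,L,s)`
satisfying the conditions (C1)–(C4). -/
structure CubicalIGS (d L s : ℕ) where
  hd : 1 ≤ d
  hL : 3 ≤ L
  hs : 1 ≤ s
  Symb : Set (CSym d L s)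
  sys : System (↥Symb) (Fin d)
  edge_amb : ∀ x y : ↥Symb, sys.E x y → ambE (sys.typ x y) x.1 y.1
  glue_amb : ∀ (j : Fin d) (x y : ↥Symb), sys.glue j x y → ambI j x.1 y.1
  C1 : ∀ w : CSym d L s, (∃ j, onAxis j w) → w ∈ Symb
  C2 : ∀ (j : Fin d) (x y : ↥Symb), onAxis j x.1 → onAxis j y.1 → ambE j x.1 y.1 →
    sys.E x y
  C3 : ∀ (j : Fin d) (x y : ↥Symb), onAxis j x.1 → onAxis j y.1 → ambI j x.1 y.1 →
    sys.glue j x y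
  C4_eta : ∀ j : Fin d, ∃ ψ : Iso sys sys,
    ∀ x : ↥Symb, (ψ.hom.toFun x : CSym d L s) = etaMap j x.1
  C4_plus : ∀ j k : Fin d, j ≠ k → ∃ ψ : Iso sys sys,
    ∀ x : ↥Symb, (ψ.hom.toFun x : CSym d L s) = swapMap j k x.1
  C4_minus : ∀ j k : Fin d, j ≠ k → ∃ ψ : Iso sys sys,
    ∀ x : ↥Symb, (ψ.hom.toFun x : CSym d L s) = aswapMap j k x.1

/-- The corner symbol `𝐤`: first coordinate `k`, all other coordinates `1`, label `1`. -/
def cornerSym {d L s : ℕ} (cub : CubicalIGS d L s) (k : Fin L) : ↥cub.Symb :=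
  ⟨⟨fun i => if (i : ℕ) = 0 then k else ⟨0, by have := k.isLt; omega⟩,
      ⟨0, by have := cub.hs; omega⟩⟩, by
    apply cub.C1
    refine ⟨⟨0, cub.hd⟩, fun i hi => ?_, rfl⟩
    have hiv : (i : ℕ) ≠ 0 := fun h => hi (Fin.ext h)
    left
    simp [hiv]⟩

end IGSP
namespace IGSP

/-- The edge relation of the Sierpiński gasket IGS. -/
abbrev gasketE (x y : Fin 3) : Prop :=
  (x = 0 ∧ y = 1) ∨ (x = 1 ∧ y = 2) ∨ (x = 0 ∧ y = 2)

/-- The Sierpiński gasket iterated graph system. -/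
noncomputable def gasket : System (Fin 3) (Fin 3) where
  E := gasketE
  not_both := by decide
  irrefl := by decide
  conn := by
    have hadj : ∀ a b : Fin 3, a ≠ b → gasketE a b ∨ gasketE b a := by decide
    intro x y
    rcases eq_or_ne x y with rfl | h
    · exact Relation.ReflTransGen.refl
    · exact Relation.ReflTransGen.single (hadj x y h)
  typ := fun x y => if x = 0 ∧ y = 1 then 0 else if x = 1 ∧ y = 2 then 1 else 2
  typ_surj := by decide
  glue := fun t x y =>
    (t = 0 ∧ x = 1 ∧ y = 0) ∨ (t = 1 ∧ x = 2 ∧ y = 1) ∨ (t = 2 ∧ x = 2 ∧ y = 0)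
  glue_nonempty := by decide

open Fin.NatCast in
/-- The pentagonal Sierpiński carpet iterated graph system. -/
noncomputable def pentagon : System (Fin 5) (Fin 5) where
  E := fun x y => y = x + 1
  not_both := by decide
  irrefl := by decide
  conn := by
    intro x y
    have key : ∀ (k : ℕ) (z : Fin 5),
        Relation.ReflTransGen (fun a b : Fin 5 => b = a + 1 ∨ a = b + 1) z (z + (k : Fin 5)) := by
      intro k
      induction k with
      | zero => intro z; simpa using Relation.ReflTransGen.refl
      | succ n ih =>
          intro z
          have h : ((n + 1 : ℕ) : Fin 5) = ((n : ℕ) : Fin 5) + 1 := by push_cast; ring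
          rw [h, ← add_assoc]
          exact (ih z).tail (Or.inl rfl)
    have h2 := key ((y - x : Fin 5) : ℕ) x
    rw [Fin.cast_val_eq_self] at h2
    have h3 : x + (y - x) = y := by abel
    rwa [h3] at h2
  typ := fun x _ => x
  typ_surj := fun t => ⟨t, t + 1, rfl, rfl⟩
  glue := fun t x y => (x = t + 1 ∧ y = t) ∨ (x = t + 2 ∧ y = t + 4)
  glue_nonempty := fun t => ⟨t + 1, t, Or.inl ⟨rfl, rfl⟩⟩

/-- The interval iterated graph system `𝔉(1, L)`. -/
noncomputable def intervalSys (L : ℕ) (hL : 3 ≤ L) : System (Fin L) Unit where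
  E x y := (y : ℕ) = (x : ℕ) + 1
  not_both := by intro x y h h'; omega
  irrefl := by intro x h; omega
  conn := by
    have key : ∀ (k : ℕ) (hk : k < L),
        Relation.ReflTransGen (fun a b : Fin L => ((b : ℕ) = (a : ℕ) + 1) ∨ ((a : ℕ) = (b : ℕ) + 1))
          ⟨0, by omega⟩ ⟨k, hk⟩ := by
      intro k
      induction k with
      | zero => intro hk; exact Relation.ReflTransGen.refl
      | succ n ih =>
          intro hk
          exact Relation.ReflTransGen.tail (ih (by omega)) (Or.inl rfl)
    intro x y
    have hsymm : Symmetric fun a b : Fin L => ((b : ℕ) = (a : ℕ) + 1) ∨ ((a : ℕ) = (b : ℕ) + 1) :=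
      fun a b h => h.symm
    have hx := key x.val x.isLt
    have hy := key y.val y.isLt
    simp only [Fin.eta] at hx hy
    exact Relation.ReflTransGen.trans ((@Relation.ReflTransGen.stdSymm _ _ ⟨hsymm⟩).symm _ _ hx) hy
  typ := fun _ _ => ()
  typ_surj := by
    intro t
    refine ⟨⟨0, by omega⟩, ⟨1, by omega⟩, rfl, ?_⟩
    cases t; rfl
  glue := fun _ x y => (x : ℕ) = L - 1 ∧ (y : ℕ) = 0
  glue_nonempty := fun _ => ⟨⟨L - 1, by omega⟩, ⟨0, by omega⟩, rfl, rfl⟩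

variable {S T : Type}

/-- A folding of `G_{k+n}` onto `w̃ · W_n`: a graph mapping into the induced subgraph on
`w̃ · W_n` which fixes `w̃ · W_n` pointwise. -/
def HasFolding [Nonempty T] (F : System S T) (k n : ℕ) (wt : Word S k) : Prop :=
  ∃ f : Word S (k + n) → Word S (k + n),
    (∀ x, ∃ u : Word S n, f x = Fin.append wt u) ∧
    (∀ u : Word S n, f (Fin.append wt u) = Fin.append wt u) ∧
    (∀ x y, adjW F (k + n) x y → f x = f y ∨ adjW F (k + n) (f x) (f y))

end IGSP

/-!
Projecting a path to a lower level never lengthens it. A non-collapsing path lifts to every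
higher level by repeating the last letter of each word: an edge between words with different
prefixes is a gluing edge whose type the padded words inherit, so the same gluing pair of last
letters gives an edge at every level. A collapsing edge becomes non-collapsing one level up once a
gluing pair of its type is appended. Along a witnessing sequence the lengths are non-decreasing
and bounded, hence eventually constant, and a projection that loses no vertex sees no collapse.
For (iii): projections are 1-Lipschitz, so every point of `𝒩(w)` is close to `w` as soon as
witnessing paths are eventually non-collapsing with bounded diameter; conversely every vertex of a
non-collapsing path lies in the fundamental neighbourhood of its first vertex.
-/

namespace List

variable {α β : Type*}

theorem head?_destutter' (R : α → α → Prop) [DecidableRel R] :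
    ∀ (l : List α) (a : α), (l.destutter' R a).head? = some a
  | [], _ => rfl
  | b :: l, a => by
    by_cases h : R a b
    · rw [destutter'_cons_pos _ h]; rfl
    · rw [destutter'_cons_neg _ h]; exact head?_destutter' R l a

theorem head?_destutter (R : α → α → Prop) [DecidableRel R] :
    ∀ l : List α, (l.destutter R).head? = l.head?
  | [] => rfl
  | a :: l => by rw [destutter_cons', head?_destutter']; rfl

theorem exists_destutter_cons_eq_cons (R : α → α → Prop) [DecidableRel R] (a : α)
    (l : List α) :
    ∃ s, (a :: l).destutter R = a :: s := by
  have h := head?_destutter R (a :: l)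
  cases hd : (a :: l).destutter R with
  | nil => simp [hd] at h
  | cons x s => simp only [hd, head?_cons, Option.some.injEq] at h; exact ⟨s, by rw [h]⟩

theorem IsChain.and {R R' : α → α → Prop} {l : List α} (h : l.IsChain R)
    (h' : l.IsChain R') : l.IsChain (fun a b => R a b ∧ R' a b) :=
  isChain_iff_getElem.mpr fun i hi =>
    ⟨isChain_iff_getElem.mp h i hi, isChain_iff_getElem.mp h' i hi⟩

section Ne

variable [DecidableRel (fun a b : α => a ≠ b)] [DecidableRel (fun a b : β => a ≠ b)]

theorem destutter_ne_cons_self (a : α) (l : List α) :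
    (a :: a :: l).destutter (· ≠ ·) = (a :: l).destutter (· ≠ ·) := by
  rw [destutter_cons_cons, if_neg (not_not.mpr rfl), destutter_cons']

theorem destutter_ne_cons_cons {a b : α} (h : a ≠ b) (l : List α) :
    (a :: b :: l).destutter (· ≠ ·) = a :: (b :: l).destutter (· ≠ ·) := by
  rw [destutter_cons_cons, if_pos h, destutter_cons']

theorem getLast?_destutter_ne : ∀ l : List α, (l.destutter (· ≠ ·)).getLast? = l.getLast?
  | [] => rfl
  | [_] => rfl
  | a :: b :: l => by
    have ih := getLast?_destutter_ne (b :: l)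
    by_cases h : a = b
    · subst h; rw [destutter_ne_cons_self, ih, getLast?_cons_cons]
    · obtain ⟨s, hs⟩ := exists_destutter_cons_eq_cons (· ≠ ·) b l
      rw [destutter_ne_cons_cons h, hs, getLast?_cons_cons, ← hs, ih, getLast?_cons_cons]

theorem isChain_destutter_ne_of_isChain_eq_or {R : α → α → Prop} :
    ∀ {l : List α}, l.IsChain (fun a b => a = b ∨ R a b) →
      (l.destutter (· ≠ ·)).IsChain R
  | [], _ => isChain_nil
  | [_], _ => isChain_singleton _
  | a :: b :: l, hl => by
    obtain ⟨hab, hl⟩ := isChain_cons_cons.mp hl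
    have ih := isChain_destutter_ne_of_isChain_eq_or hl
    by_cases h : a = b
    · subst h; rwa [destutter_ne_cons_self]
    · obtain ⟨s, hs⟩ := exists_destutter_cons_eq_cons (· ≠ ·) b l
      rw [destutter_ne_cons_cons h, hs]
      exact (hs ▸ ih).cons_cons (hab.resolve_left h)

theorem destutter_ne_map_destutter_ne (f : α → β) :
    ∀ l : List α,
      ((l.destutter (· ≠ ·)).map f).destutter (· ≠ ·) = (l.map f).destutter (· ≠ ·)
  | [] => rfl
  | [_] => rfl
  | a :: b :: l => by
    have ih := destutter_ne_map_destutter_ne f (b :: l)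
    by_cases h : a = b
    · subst h
      rw [destutter_ne_cons_self, ih]
      simp only [map_cons]
      rw [destutter_ne_cons_self]
    · obtain ⟨s, hs⟩ := exists_destutter_cons_eq_cons (· ≠ ·) b l
      rw [hs] at ih
      simp only [destutter_ne_cons_cons h, hs, map_cons] at ih ⊢
      by_cases hf : f a = f b
      · rw [hf, destutter_ne_cons_self, destutter_ne_cons_self, ih]
      · rw [destutter_ne_cons_cons hf, destutter_ne_cons_cons hf, ih]

end Ne

end List

namespace IGSP

section ReplacementGraph

variable {S T : Type} [Nonempty T] (F : System S T)

theorem edge_one {w v : Word S 1} : edge F 1 w v ↔ F.E (w 0) (v 0) := Iff.rfl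

theorem edge_succ_succ {L : ℕ} {w v : Word S (L + 2)} :
    edge F (L + 2) w v ↔
      (Fin.init w = Fin.init v ∧ F.E (w (Fin.last (L + 1))) (v (Fin.last (L + 1)))) ∨
      (edge F (L + 1) (Fin.init w) (Fin.init v) ∧
        F.glue (etyp F (L + 1) (Fin.init w) (Fin.init v))
          (w (Fin.last (L + 1))) (v (Fin.last (L + 1)))) := Iff.rfl

open Classical in
theorem etyp_succ_succ {L : ℕ} (w v : Word S (L + 2)) :
    etyp F (L + 2) w v =
      if Fin.init w = Fin.init v then F.typ (w (Fin.last (L + 1))) (v (Fin.last (L + 1)))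
      else etyp F (L + 1) (Fin.init w) (Fin.init v) := rfl

theorem ne_of_edge : ∀ {L : ℕ} {w v : Word S L}, edge F L w v → w ≠ v
  | 0, _, _, h => h.elim
  | 1, _, _, h => by rintro rfl; exact F.irrefl _ ((edge_one F).mp h)
  | L + 2, _, _, h => by
    rintro rfl
    rcases (edge_succ_succ F).mp h with ⟨_, h⟩ | ⟨h, _⟩
    · exact F.irrefl _ h
    · exact ne_of_edge h rfl

theorem ne_of_adjW {L : ℕ} {w v : Word S L} (h : adjW F L w v) : w ≠ v :=
  h.elim (ne_of_edge F) fun h => (ne_of_edge F h).symm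

theorem replGraph_adj {L : ℕ} {w v : Word S L} : (replGraph F L).Adj w v ↔ adjW F L w v :=
  ⟨And.right, fun h => ⟨ne_of_adjW F h, h⟩⟩

theorem edge_init {L : ℕ} {w v : Word S (L + 1)} (h : edge F (L + 1) w v) :
    Fin.init w = Fin.init v ∨ edge F L (Fin.init w) (Fin.init v) := by
  match L, w, v, h with
  | 0, _, _, _ => exact Or.inl (Subsingleton.elim _ _)
  | _ + 1, _, _, h => exact ((edge_succ_succ F).mp h).imp And.left And.left

theorem adjW_init {L : ℕ} {w v : Word S (L + 1)} (h : adjW F (L + 1) w v) :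
    Fin.init w = Fin.init v ∨ adjW F L (Fin.init w) (Fin.init v) := by
  rcases h with h | h
  · exact (edge_init F h).imp id Or.inl
  · exact (edge_init F h).imp Eq.symm Or.inr

theorem adjW_take {k L : ℕ} (h : k ≤ L) {w v : Word S L} (hwv : adjW F L w v) :
    Fin.take k h w = Fin.take k h v ∨ adjW F k (Fin.take k h w) (Fin.take k h v) := by
  induction L, h using Nat.le_induction with
  | base => rw [Fin.take_eq_self, Fin.take_eq_self]; exact Or.inr hwv
  | succ L hkL ih =>
    rw [← Fin.take_init _ hkL, ← Fin.take_init _ hkL]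
    rcases adjW_init F hwv with h | h
    · exact Or.inl (by rw [h])
    · exact ih h

theorem edge_snoc_snoc {m : ℕ} {w v : Word S (m + 1)} {a b : S} (he : edge F (m + 1) w v)
    (hg : F.glue (etyp F (m + 1) w v) a b) :
    edge F (m + 2) (Fin.snoc w a) (Fin.snoc v b) := by
  refine (edge_succ_succ F).mpr (Or.inr ⟨?_, ?_⟩)
  · simpa only [Fin.init_snoc] using he
  · simpa only [Fin.init_snoc, Fin.snoc_last] using hg

theorem glue_of_edge_of_init_ne {m : ℕ} {w v : Word S (m + 1)} (he : edge F (m + 1) w v)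
    (hi : Fin.init w ≠ Fin.init v) :
    F.glue (etyp F (m + 1) w v) (w (Fin.last m)) (v (Fin.last m)) := by
  match m, w, v, he with
  | 0, _, _, _ => exact absurd (Subsingleton.elim _ _) hi
  | _ + 1, _, _, he =>
    rw [etyp_succ_succ, if_neg hi]
    exact (((edge_succ_succ F).mp he).resolve_left fun h => hi h.1).2

end ReplacementGraph

section Projection

variable {S : Type}

open Classical in
theorem proj_eq_destutter {k L : ℕ} (h : k ≤ L) (θ : List (Word S L)) :
    proj h θ = (θ.map (Fin.take k h)).destutter (· ≠ ·) := rfl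

theorem head?_proj {k L : ℕ} (h : k ≤ L) (θ : List (Word S L)) :
    (proj h θ).head? = θ.head?.map (Fin.take k h) := by
  rw [proj_eq_destutter, List.head?_destutter, List.head?_map]

open Classical in
theorem getLast?_proj {k L : ℕ} (h : k ≤ L) (θ : List (Word S L)) :
    (proj h θ).getLast? = θ.getLast?.map (Fin.take k h) := by
  rw [proj_eq_destutter, List.getLast?_destutter_ne, List.getLast?_map]

open Classical in
theorem length_proj_le {k L : ℕ} (h : k ≤ L) (θ : List (Word S L)) :
    (proj h θ).length ≤ θ.length :=
  (List.destutter_sublist _ _).length_le.trans_eq (List.length_map _)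

open Classical in
theorem proj_proj {k n L : ℕ} (hkn : k ≤ n) (hnL : n ≤ L) (θ : List (Word S L)) :
    proj hkn (proj hnL θ) = proj (hkn.trans hnL) θ := by
  simp only [proj_eq_destutter, List.destutter_ne_map_destutter_ne, List.map_map]
  rfl

open Classical in
theorem isPath_proj {T : Type} [Nonempty T] (F : System S T) {k L : ℕ} (h : k ≤ L)
    {θ : List (Word S L)} (hθ : IsPath F L θ) : IsPath F k (proj h θ) := by
  refine ⟨by simpa [proj_eq_destutter] using hθ.1, ?_⟩
  rw [proj_eq_destutter]
  refine List.isChain_destutter_ne_of_isChain_eq_or ?_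
  exact (List.isChain_map _).mpr (hθ.2.imp fun _ _ => adjW_take F h)

end Projection

section Padding

variable {S : Type}

def padTo (m k : ℕ) (w : Word S (m + 1)) : Word S k :=
  fun i => w ⟨min i m, by omega⟩

theorem padTo_self {m : ℕ} (w : Word S (m + 1)) : padTo m (m + 1) w = w := by
  funext i
  simp [padTo, Nat.le_of_lt_succ i.isLt]

theorem init_padTo {m n : ℕ} (w : Word S (m + 1)) :
    Fin.init (padTo m (n + 2) w) = padTo m (n + 1) w := rfl

theorem padTo_last {m n : ℕ} (hmn : m ≤ n) (w : Word S (m + 1)) :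
    padTo m (n + 2) w (Fin.last (n + 1)) = w (Fin.last m) := by
  simp [padTo, Fin.last, show m ≤ n + 1 by omega]

theorem take_padTo {m k n : ℕ} (h : k + 1 ≤ n + 1) (w : Word S (m + 1)) :
    Fin.take (k + 1) h (padTo m (n + 1) w) = padTo m (k + 1) w := rfl

theorem take_padTo_of_le {m k n : ℕ} (hkm : k ≤ m) (h : k + 1 ≤ n + 1) (w : Word S (m + 1)) :
    Fin.take (k + 1) h (padTo m (n + 1) w) = Fin.take (k + 1) (Nat.succ_le_succ hkm) w := by
  funext i
  simp [Fin.take, padTo, show (i : ℕ) ≤ m by omega, Fin.castLE]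

theorem padTo_injective {m n : ℕ} (hmn : m ≤ n) :
    Function.Injective (padTo m (n + 1) : Word S (m + 1) → Word S (n + 1)) := fun w v h => by
  simpa [take_padTo_of_le le_rfl (Nat.succ_le_succ hmn), Fin.take_eq_self] using
    congrArg (Fin.take (m + 1) (Nat.succ_le_succ hmn)) h

theorem ncRel_iff_init_ne {m : ℕ} {w v : Word S (m + 1)} :
    ncRel w v ↔ Fin.init w ≠ Fin.init v := by
  simp only [ncRel, ne_eq, funext_iff, not_forall, Fin.init]
  constructor
  · rintro ⟨j, hj, hne⟩
    exact ⟨⟨j, by omega⟩, hne⟩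
  · rintro ⟨j, hne⟩
    exact ⟨j.castSucc, by simp, hne⟩

variable {T : Type} [Nonempty T] (F : System S T)

theorem edge_padTo {m : ℕ} {w v : Word S (m + 1)} (he : edge F (m + 1) w v)
    (hi : Fin.init w ≠ Fin.init v) {n : ℕ} (hmn : m ≤ n) :
    edge F (n + 1) (padTo m (n + 1) w) (padTo m (n + 1) v) ∧
      etyp F (n + 1) (padTo m (n + 1) w) (padTo m (n + 1) v) = etyp F (m + 1) w v := by
  induction n, hmn using Nat.le_induction with
  | base => rw [padTo_self, padTo_self]; exact ⟨he, rfl⟩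
  | succ n hmn ih =>
    have hne : Fin.init (padTo m (n + 2) w) ≠ Fin.init (padTo m (n + 2) v) := ne_of_edge F ih.1
    refine ⟨(edge_succ_succ F).mpr (Or.inr ⟨ih.1, ?_⟩), ?_⟩
    · rw [init_padTo, init_padTo, ih.2, padTo_last hmn, padTo_last hmn]
      exact glue_of_edge_of_init_ne F he hi
    · rw [etyp_succ_succ, if_neg hne, init_padTo, init_padTo, ih.2]

theorem adjW_padTo {m : ℕ} {w v : Word S (m + 1)} (hwv : adjW F (m + 1) w v) (hnc : ncRel w v)
    {n : ℕ} (hmn : m ≤ n) : adjW F (n + 1) (padTo m (n + 1) w) (padTo m (n + 1) v) := by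
  rw [ncRel_iff_init_ne] at hnc
  exact hwv.imp (fun he => (edge_padTo F he hnc hmn).1)
    fun he => (edge_padTo F he hnc.symm hmn).1

end Padding

section IntersectionPaths

variable {S T : Type} [Nonempty T] (F : System S T)

noncomputable def padPaths {m : ℕ} (θ : List (Word S (m + 1))) (n : ℕ) :
    List (Word S (n + 1)) :=
  if h : m ≤ n then θ.map (padTo m (n + 1)) else proj (Nat.succ_le_succ (le_of_not_ge h)) θ

theorem padPaths_self {m : ℕ} (θ : List (Word S (m + 1))) : padPaths θ m = θ := by
  simp [padPaths, funext padTo_self]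

theorem length_padPaths_le {m : ℕ} (θ : List (Word S (m + 1))) (n : ℕ) :
    (padPaths θ n).length ≤ θ.length := by
  unfold padPaths
  split_ifs
  · rw [List.length_map]
  · exact length_proj_le _ θ

theorem isPath_padPaths {m : ℕ} {θ : List (Word S (m + 1))} (hp : IsPath F (m + 1) θ)
    (hnc : NonCollapsing θ) (n : ℕ) : IsPath F (n + 1) (padPaths θ n) := by
  unfold padPaths
  split_ifs with hmn
  · refine ⟨by simpa using hp.1, (List.isChain_map _).mpr ?_⟩
    exact (hp.2.and hnc).imp fun _ _ h => adjW_padTo F h.1 h.2 hmn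
  · exact isPath_proj F _ hp

open Classical in
theorem proj_padPaths {m : ℕ} {θ : List (Word S (m + 1))} (hθ : θ.IsChain (· ≠ ·))
    {k n : ℕ} (hkn : k ≤ n) : proj (Nat.succ_le_succ hkn) (padPaths θ n) = padPaths θ k := by
  unfold padPaths
  by_cases hmk : m ≤ k
  · rw [dif_pos hmk, dif_pos (hmk.trans hkn), proj_eq_destutter]
    simp only [List.map_map, Function.comp_def, take_padTo]
    refine List.destutter_of_isChain _ _ ((List.isChain_map _).mpr ?_)
    exact hθ.imp fun _ _ h => (padTo_injective hmk).ne h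
  · rw [dif_neg hmk]
    by_cases hmn : m ≤ n
    · simp only [dif_pos hmn, proj_eq_destutter, List.map_map, Function.comp_def,
        take_padTo_of_le (le_of_not_ge hmk)]
    · rw [dif_neg hmn, proj_proj]

theorem isIntersectionPath_of_nonCollapsing {m : ℕ} {θ : List (Word S (m + 1))}
    (hp : IsPath F (m + 1) θ) (hnc : NonCollapsing θ) : IsIntersectionPath F m θ :=
  ⟨hp, padPaths θ, padPaths_self θ, isPath_padPaths F hp hnc,
    fun _ _ hkn => proj_padPaths (hp.2.imp fun _ _ => ne_of_adjW F) hkn,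
    θ.length, length_padPaths_le θ⟩

theorem isIntersectionPath_proj {k n : ℕ} {θ : List (Word S (n + 1))}
    (hθ : IsIntersectionPath F n θ) (hkn : k ≤ n) :
    IsIntersectionPath F k (proj (Nat.succ_le_succ hkn) θ) := by
  obtain ⟨-, Θ, rfl, hpaths, hproj, hC⟩ := hθ
  rw [hproj k n hkn]
  exact ⟨hpaths k, Θ, rfl, hpaths, hproj, hC⟩

theorem exists_adjW_snoc_snoc {m : ℕ} {w v : Word S (m + 1)} (hwv : adjW F (m + 1) w v) :
    ∃ a b : S, adjW F (m + 2) (Fin.snoc w a) (Fin.snoc v b) := by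
  rcases hwv with he | he
  · obtain ⟨a, b, hg⟩ := F.glue_nonempty (etyp F (m + 1) w v)
    exact ⟨a, b, Or.inl (edge_snoc_snoc F he hg)⟩
  · obtain ⟨a, b, hg⟩ := F.glue_nonempty (etyp F (m + 1) v w)
    exact ⟨b, a, Or.inr (edge_snoc_snoc F he hg)⟩

theorem isIntersectionPath_pair {m : ℕ} {w v : Word S (m + 1)} (hwv : adjW F (m + 1) w v) :
    IsIntersectionPath F m [w, v] := by
  classical
  obtain ⟨a, b, hab⟩ := exists_adjW_snoc_snoc F hwv
  have hnc : ncRel (Fin.snoc w a : Word S (m + 2)) (Fin.snoc v b) := by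
    rw [ncRel_iff_init_ne, Fin.init_snoc, Fin.init_snoc]
    exact ne_of_adjW F hwv
  have hlift := isIntersectionPath_proj F (isIntersectionPath_of_nonCollapsing F
    ⟨List.cons_ne_nil _ _, List.isChain_pair.mpr hab⟩ (List.isChain_pair.mpr hnc)) m.le_succ
  have htake : ∀ (u : Word S (m + 1)) (c : S),
      Fin.take (m + 1) (Nat.succ_le_succ m.le_succ) (Fin.snoc u c : Word S (m + 2)) = u :=
    fun u c => Fin.init_snoc (α := fun _ => S) c u
  simp only [proj_eq_destutter, List.map_cons, List.map_nil, htake, List.destutter_pair] at hlift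
  rwa [if_pos (ne_of_adjW F hwv)] at hlift

theorem isIntersectionPath_of_length_le_two {m : ℕ} {θ : List (Word S (m + 1))}
    (hp : IsPath F (m + 1) θ) (hlen : θ.length ≤ 2) : IsIntersectionPath F m θ := by
  rcases θ with _ | ⟨w, _ | ⟨v, _ | ⟨x, l⟩⟩⟩
  · exact absurd rfl hp.1
  · exact isIntersectionPath_of_nonCollapsing F hp (List.isChain_singleton w)
  · exact isIntersectionPath_pair F (List.isChain_pair.mp hp.2)
  · simp at hlen

end IntersectionPaths

section Collapsing

variable {S : Type}

open Classical in
theorem nonCollapsing_of_length_proj_eq {n : ℕ} (h : n + 1 ≤ n + 2) {θ : List (Word S (n + 2))}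
    (hlen : (proj h θ).length = θ.length) : NonCollapsing θ := by
  rw [proj_eq_destutter] at hlen
  have hchain := (List.destutter_eq_self_iff _ _).mp
    ((List.destutter_sublist _ _).eq_of_length (hlen.trans (List.length_map _).symm))
  exact ((List.isChain_map _).mp hchain).imp fun _ _ hne => ncRel_iff_init_ne.mpr hne

theorem eventually_nonCollapsing (Θ : (n : ℕ) → List (Word S (n + 1)))
    (hproj : ∀ (k n : ℕ) (h : k ≤ n), proj (Nat.succ_le_succ h) (Θ n) = Θ k)
    (hC : ∃ C : ℕ, ∀ n, (Θ n).length ≤ C) :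
    ∃ N : ℕ, ∀ n ≥ N, NonCollapsing (Θ n) := by
  have hmono : Monotone fun n => (Θ n).length := fun k n hkn => by
    simpa only [← hproj k n hkn] using length_proj_le _ (Θ n)
  obtain ⟨C, hC⟩ := hC
  obtain ⟨_, ⟨N, rfl⟩, hN⟩ := BddAbove.exists_isGreatest_of_nonempty
    ⟨C, Set.forall_mem_range.mpr hC⟩ (Set.range_nonempty fun n => (Θ n).length)
  refine ⟨N + 1, fun n hn => ?_⟩
  obtain ⟨n, rfl⟩ : ∃ k, n = k + 1 := ⟨n - 1, by omega⟩
  refine nonCollapsing_of_length_proj_eq (Nat.succ_le_succ n.le_succ) ?_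
  rw [hproj n (n + 1) n.le_succ]
  exact le_antisymm (hmono n.le_succ) ((hN ⟨n + 1, rfl⟩).trans (hmono (by omega)))

end Collapsing

section Geometry

variable {S T : Type} [Nonempty T] (F : System S T)

theorem mem_nbhd_of_mem {m : ℕ} {θ : List (Word S (m + 1))} (hp : IsPath F (m + 1) θ)
    (hnc : NonCollapsing θ) {w v : Word S (m + 1)} (hw : θ.head? = some w) (hv : v ∈ θ) :
    v ∈ nbhd F m w := by
  obtain ⟨s, t, rfl⟩ := List.mem_iff_append.mp hv
  have hpre : (s ++ [v]) <:+: s ++ v :: t := by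
    simpa using (List.prefix_append (s ++ [v]) t).isInfix
  refine ⟨s ++ [v], isIntersectionPath_of_nonCollapsing F ⟨by simp, hp.2.infix hpre⟩
    (hnc.infix hpre), ?_, List.getLast?_concat⟩
  simpa [List.head?_append] using hw

theorem dist_le_of_boundedGeometry (hF : BoundedGeometry F) :
    ∃ D : ℕ, ∀ (m : ℕ) (θ : List (Word S (m + 1))),
      IsPath F (m + 1) θ → NonCollapsing θ →
      ∀ x ∈ θ, ∀ y ∈ θ, (replGraph F (m + 1)).dist x y ≤ D := by
  obtain ⟨D, hD⟩ := hF
  refine ⟨D, fun m θ hp hnc x hx y hy => ?_⟩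
  have hw := List.head?_eq_some_head hp.1
  exact hD m _ x (mem_nbhd_of_mem F hp hnc hw hx) y (mem_nbhd_of_mem F hp hnc hw hy)

theorem exists_walk_take {k L : ℕ} (h : k ≤ L) {x y : Word S L} :
    ∀ p : (replGraph F L).Walk x y,
      ∃ q : (replGraph F k).Walk (Fin.take k h x) (Fin.take k h y), q.length ≤ p.length
  | .nil => ⟨.nil, le_rfl⟩
  | .cons hxz p => by
    obtain ⟨q, hq⟩ := exists_walk_take h p
    rcases adjW_take F h ((replGraph_adj F).mp hxz) with heq | hadj
    · exact ⟨q.copy heq.symm rfl, by simp; omega⟩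
    · exact ⟨.cons ((replGraph_adj F).mpr hadj) q, by simpa using hq⟩

theorem reachable_of_isPath {L : ℕ} {θ : List (Word S L)} (hp : IsPath F L θ) {x y : Word S L}
    (hx : θ.head? = some x) (hy : θ.getLast? = some y) : (replGraph F L).Reachable x y := by
  rw [SimpleGraph.reachable_iff_reflTransGen]
  have := List.relationReflTransGen_of_exists_isChain θ
    (hp.2.imp fun _ _ => (replGraph_adj F).mpr) hp.1
  rwa [(List.head_eq_iff_head?_eq_some hp.1).mpr hx, List.getLast_of_mem_getLast? hy] at this

theorem exists_walk_of_mem_nbhd {D : ℕ}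
    (hD : ∀ (n : ℕ) (θ : List (Word S (n + 1))), IsPath F (n + 1) θ → NonCollapsing θ →
      ∀ x ∈ θ, ∀ y ∈ θ, (replGraph F (n + 1)).dist x y ≤ D)
    {m : ℕ} {w v : Word S (m + 1)} (hv : v ∈ nbhd F m w) :
    ∃ p : (replGraph F (m + 1)).Walk w v, p.length ≤ D := by
  obtain ⟨_, ⟨-, Θ, rfl, hpaths, hproj, hC⟩, hw, hv⟩ := hv
  obtain ⟨N, hN⟩ := eventually_nonCollapsing Θ hproj hC
  have hmn : m ≤ N + m := Nat.le_add_left m N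
  obtain ⟨x, hx⟩ : ∃ x, (Θ (N + m)).head? = some x :=
    ⟨_, List.head?_eq_some_head (hpaths _).1⟩
  obtain ⟨y, hy⟩ : ∃ y, (Θ (N + m)).getLast? = some y :=
    ⟨_, List.getLast?_eq_some_getLast (hpaths _).1⟩
  rw [← hproj m (N + m) hmn, head?_proj, hx, Option.map_some, Option.some_inj] at hw
  rw [← hproj m (N + m) hmn, getLast?_proj, hy, Option.map_some, Option.some_inj] at hv
  obtain ⟨p, hp⟩ := (reachable_of_isPath F (hpaths (N + m)) hx hy).exists_walk_length_eq_dist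
  obtain ⟨q, hq⟩ := exists_walk_take F (Nat.succ_le_succ hmn) p
  subst hw hv
  refine ⟨q, hq.trans (hp.trans_le ?_)⟩
  exact hD _ _ (hpaths _) (hN _ (Nat.le_add_right N m)) x (List.mem_of_head? hx)
    y (List.mem_of_getLast? hy)

theorem boundedGeometry_of_dist_le {D : ℕ}
    (hD : ∀ (n : ℕ) (θ : List (Word S (n + 1))), IsPath F (n + 1) θ → NonCollapsing θ →
      ∀ x ∈ θ, ∀ y ∈ θ, (replGraph F (n + 1)).dist x y ≤ D) :
    BoundedGeometry F := by
  refine ⟨2 * D, fun m w v₁ hv₁ v₂ hv₂ => ?_⟩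
  obtain ⟨p₁, hp₁⟩ := exists_walk_of_mem_nbhd F hD hv₁
  obtain ⟨p₂, hp₂⟩ := exists_walk_of_mem_nbhd F hD hv₂
  have := SimpleGraph.dist_le (p₁.reverse.append p₂)
  rw [SimpleGraph.Walk.length_append, SimpleGraph.Walk.length_reverse] at this
  omega

end Geometry

theorem statement7_general {S T : Type} [Nonempty T] (F : System S T) :
    (∀ (m : ℕ) (θ : List (Word S (m + 1))), IsPath F (m + 1) θ → θ.length ≤ 2 →
      IsIntersectionPath F m θ) ∧
    (∀ (m : ℕ) (θ : List (Word S (m + 1))), IsPath F (m + 1) θ → NonCollapsing θ →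
      IsIntersectionPath F m θ) ∧
    (∀ (m : ℕ) (θ : List (Word S (m + 1))) (Θ : (n : ℕ) → List (Word S (n + 1))),
      Θ m = θ → (∀ n, IsPath F (n + 1) (Θ n)) →
      (∀ (k n : ℕ) (h : k ≤ n), proj (Nat.succ_le_succ h) (Θ n) = Θ k) →
      (∃ C : ℕ, ∀ n, (Θ n).length ≤ C) →
      ∃ N : ℕ, ∀ n ≥ N, NonCollapsing (Θ n)) ∧
    (BoundedGeometry F ↔
      ∃ D : ℕ, ∀ (m : ℕ) (θ : List (Word S (m + 1))),
        IsPath F (m + 1) θ → NonCollapsing θ →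
        ∀ x ∈ θ, ∀ y ∈ θ, (replGraph F (m + 1)).dist x y ≤ D) :=
  ⟨fun _ _ => isIntersectionPath_of_length_le_two F,
    fun _ _ => isIntersectionPath_of_nonCollapsing F,
    fun _ _ Θ _ _ hproj hC => eventually_nonCollapsing Θ hproj hC,
    dist_le_of_boundedGeometry F, fun ⟨_, hD⟩ => boundedGeometry_of_dist_le F hD⟩

/-- (i) Paths with at most two vertices and non-collapsing paths are
intersection paths; (ii) the witnessing sequence of an intersection path is eventually
non-collapsing; (iii) bounded geometry is equivalent to a uniform diameter bound on
non-collapsing paths. -/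
theorem statement7 {S T : Type} [Fintype S] [Nonempty T] (F : System S T) (hGR : GR F) :
    (∀ (m : ℕ) (θ : List (Word S (m + 1))), IsPath F (m + 1) θ → θ.length ≤ 2 →
      IsIntersectionPath F m θ) ∧
    (∀ (m : ℕ) (θ : List (Word S (m + 1))), IsPath F (m + 1) θ → NonCollapsing θ →
      IsIntersectionPath F m θ) ∧
    (∀ (m : ℕ) (θ : List (Word S (m + 1))) (Θ : (n : ℕ) → List (Word S (n + 1))),
      Θ m = θ → (∀ n, IsPath F (n + 1) (Θ n)) →
      (∀ (k n : ℕ) (h : k ≤ n), proj (Nat.succ_le_succ h) (Θ n) = Θ k) →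
      (∃ C : ℕ, ∀ n, (Θ n).length ≤ C) →
      ∃ N : ℕ, ∀ n ≥ N, NonCollapsing (Θ n)) ∧
    (BoundedGeometry F ↔
      ∃ D : ℕ, ∀ (m : ℕ) (θ : List (Word S (m + 1))),
        IsPath F (m + 1) θ → NonCollapsing θ →
        ∀ x ∈ θ, ∀ y ∈ θ, (replGraph F (m + 1)).dist x y ≤ D) :=
  statement7_general F

end IGSP
end

section
/- Let 𝔉 be a cubical iterated graph system with parameters (d*,L*,s*). Then for all m ∈ ℕ and all w,v ∈ W_m, d_{G_m}(w,v) ≤ 4·diam(G_1)·L*^m. In particular diam(G_m) ≤ 4·diam(G_1)·L*^m. -/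
/-!
Every word is driven to the constant word `z ⋯ z` at a hub symbol `z`, here the origin of
the cube: first its last letter is moved to `z` inside a copy of `G₁` (cost `diam G₁`), then
its prefix is driven to `z ⋯ z` one level down, and each edge of that walk costs at most `L`
edges one level up, because the symbol at distance `L - 1` from the origin along the axis of
the edge's type is glued to the origin. The recursion `B (m + 1) ≤ L * B m + diam G₁` is
closed by the invariant `B m + diam G₁ ≤ 2 * diam G₁ * L ^ m`, which needs `L ≥ 2`.
-/

namespace SimpleGraph

variable {V W : Type*} {G : SimpleGraph V} {H : SimpleGraph W}

theorem edist_le_mul_length_of_adj (f : V → W) {c : ℕ∞}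
    (hf : ∀ ⦃x y⦄, G.Adj x y → H.edist (f x) (f y) ≤ c) {x y : V} (p : G.Walk x y) :
    H.edist (f x) (f y) ≤ c * p.length := by
  induction p with
  | nil => simp
  | cons h p ih =>
    rw [Walk.length_cons, Nat.cast_succ, mul_add_one, add_comm]
    exact H.edist_triangle.trans (add_le_add (hf h) ih)

theorem edist_le_mul_edist_of_adj (f : V → W) {c : ℕ∞} (hc : c ≠ 0)
    (hf : ∀ ⦃x y⦄, G.Adj x y → H.edist (f x) (f y) ≤ c) (x y : V) :
    H.edist (f x) (f y) ≤ c * G.edist x y := by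
  by_cases hxy : G.Reachable x y
  · obtain ⟨p, hp⟩ := hxy.exists_walk_length_eq_edist
    rw [← hp]
    exact edist_le_mul_length_of_adj f hf p
  · simp [edist_eq_top_of_not_reachable hxy, hc]

end SimpleGraph

namespace IGSP

theorem edist_le_gdiam {V : Type} [Fintype V] {G : SimpleGraph V} {u v : V}
    (h : G.Reachable u v) : G.edist u v ≤ gdiam G := by
  rw [← h.coe_dist_eq_edist, Nat.cast_le]
  exact Finset.le_sup (f := fun pr : V × V => G.dist pr.1 pr.2) (Finset.mem_univ (u, v))

section ReplacementGraph

variable {S T : Type} [Nonempty T] (F : System S T)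

theorem edge_succ_iff (n : ℕ) (w v : Word S (n + 1)) :
    edge F (n + 1) w v ↔
      (Fin.init w = Fin.init v ∧ F.E (w (Fin.last n)) (v (Fin.last n))) ∨
      (edge F n (Fin.init w) (Fin.init v) ∧
        F.glue (etyp F n (Fin.init w) (Fin.init v)) (w (Fin.last n)) (v (Fin.last n))) := by
  cases n with
  | zero => simp [edge, replData, Subsingleton.elim (Fin.init w) (Fin.init v)]
  | succ n => simp [edge, etyp, replData]

theorem not_edge_self : ∀ (n : ℕ) (w : Word S n), ¬ edge F n w w
  | 0, _, h => h
  | n + 1, w, h => by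
    rcases (edge_succ_iff F n w w).1 h with ⟨-, h⟩ | ⟨h, -⟩
    · exact F.irrefl _ h
    · exact not_edge_self n _ h

theorem replGraph_adj_iff {n : ℕ} {w v : Word S n} :
    (replGraph F n).Adj w v ↔ adjW F n w v := by
  refine ⟨And.right, fun h => ⟨?_, h⟩⟩
  rintro rfl
  exact h.elim (not_edge_self F n w) (not_edge_self F n w)

theorem edge_snoc_of_E {n : ℕ} (u : Word S n) {a b : S} (h : F.E a b) :
    edge F (n + 1) (Fin.snoc u a) (Fin.snoc u b) := by
  rw [edge_succ_iff]
  simpa using Or.inl h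

theorem edge_snoc_of_glue {n : ℕ} {u v : Word S n} (h : edge F n u v) {a b : S}
    (hg : F.glue (etyp F n u v) a b) :
    edge F (n + 1) (Fin.snoc u a) (Fin.snoc v b) := by
  rw [edge_succ_iff]
  simpa using Or.inr ⟨h, hg⟩

theorem replGraph_one_adj_iff {x y : Word S 1} :
    (replGraph F 1).Adj x y ↔ F.E (x 0) (y 0) ∨ F.E (y 0) (x 0) := by
  simp [replGraph_adj_iff, adjW, edge, replData]

theorem replGraph_one_reachable (x y : Word S 1) : (replGraph F 1).Reachable x y := by
  have hconst : ∀ w : Word S 1, w = fun _ => w 0 := fun w => funext fun i => by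
    rw [Subsingleton.elim i 0]
  rw [hconst x, hconst y, SimpleGraph.reachable_iff_reflTransGen]
  exact (F.conn (x 0) (y 0)).lift (fun a => fun _ => a) fun a b h =>
    (replGraph_one_adj_iff F).2 h

/-- The words `u·a`, `a ∈ S`, span a copy of `G₁` inside `G_{n+1}`. -/
theorem edist_snoc_le {n : ℕ} (u : Word S n) (a b : S) :
    (replGraph F (n + 1)).edist (Fin.snoc u a) (Fin.snoc u b) ≤
      (replGraph F 1).edist (fun _ => a) (fun _ => b) := by
  have hf : ∀ ⦃x y : Word S 1⦄, (replGraph F 1).Adj x y →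
      (replGraph F (n + 1)).edist (Fin.snoc u (x 0)) (Fin.snoc u (y 0)) ≤ 1 := by
    intro x y hxy
    refine SimpleGraph.edist_le_one_iff_adj_or_eq.2 (Or.inl ?_)
    rw [replGraph_adj_iff]
    exact ((replGraph_one_adj_iff F).1 hxy).imp (edge_snoc_of_E F u) (edge_snoc_of_E F u)
  simpa using SimpleGraph.edist_le_mul_edist_of_adj
    (fun x : Word S 1 => (Fin.snoc u (x 0) : Word S (n + 1))) one_ne_zero hf
    (fun _ => a) (fun _ => b)

def IsHub (z : S) (K : ℕ) : Prop :=
  ∀ t : T, ∃ a, F.glue t a z ∧ (replGraph F 1).edist (fun _ => z) (fun _ => a) ≤ K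

variable {F}

/-- The edge `u → v` of type `t` is replaced by a walk from `u·z` to `u·a` inside a copy of
`G₁`, followed by the glued edge `u·a → v·z`. -/
theorem edist_snoc_hub_le_of_edge {z : S} {K n : ℕ} (hz : IsHub F z K) {u v : Word S n}
    (h : edge F n u v) :
    (replGraph F (n + 1)).edist (Fin.snoc u z) (Fin.snoc v z) ≤ K + 1 := by
  obtain ⟨a, hglue, hdist⟩ := hz (etyp F n u v)
  have hcross : (replGraph F (n + 1)).edist (Fin.snoc u a) (Fin.snoc v z) ≤ 1 :=
    SimpleGraph.edist_le_one_iff_adj_or_eq.2 <| Or.inl <|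
      (replGraph_adj_iff F).2 (Or.inl (edge_snoc_of_glue F h hglue))
  calc _ ≤ _ := SimpleGraph.edist_triangle
    _ ≤ (K : ℕ∞) + 1 := add_le_add ((edist_snoc_le F u z a).trans hdist) hcross

theorem edist_snoc_hub_le {z : S} {K n : ℕ} (hz : IsHub F z K) (u v : Word S n) :
    (replGraph F (n + 1)).edist (Fin.snoc u z) (Fin.snoc v z) ≤
      (K + 1) * (replGraph F n).edist u v := by
  refine SimpleGraph.edist_le_mul_edist_of_adj (fun w : Word S n => (Fin.snoc w z : Word S (n + 1)))
    (by simp) (fun x y hxy => ?_) u v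
  rcases ((replGraph_adj_iff F).1 hxy) with h | h
  · exact edist_snoc_hub_le_of_edge hz h
  · rw [SimpleGraph.edist_comm]
    exact edist_snoc_hub_le_of_edge hz h

theorem edist_const_hub_add_le [Fintype S] {z : S} {K : ℕ} (hz : IsHub F z K) (hK : 1 ≤ K) :
    ∀ (n : ℕ) (w : Word S n), (replGraph F n).edist w (fun _ => z) + gdiam (replGraph F 1) ≤
      2 * gdiam (replGraph F 1) * ((K : ℕ∞) + 1) ^ n
  | 0, w => by
    rw [Subsingleton.elim w fun _ => z, SimpleGraph.edist_self]
    simp [two_mul]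
  | n + 1, w => by
    set D := gdiam (replGraph F 1)
    set e := (replGraph F n).edist (Fin.init w) (fun _ => z)
    have hfiber : (replGraph F (n + 1)).edist w (Fin.snoc (Fin.init w) z) ≤ D := by
      have h := edist_snoc_le F (Fin.init w) (w (Fin.last n)) z
      rw [Fin.snoc_init_self] at h
      exact h.trans (edist_le_gdiam (replGraph_one_reachable F _ _))
    have hlift : (replGraph F (n + 1)).edist (Fin.snoc (Fin.init w) z) (fun _ => z) ≤
        (K + 1) * e := by
      have hconst : (fun _ => z : Word S (n + 1)) = Fin.snoc (fun _ => z : Word S n) z := by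
        ext i; cases i using Fin.lastCases <;> simp
      rw [hconst]
      exact edist_snoc_hub_le hz _ _
    have hK' : (2 : ℕ∞) ≤ K + 1 := by exact_mod_cast Nat.succ_le_succ hK
    calc (replGraph F (n + 1)).edist w (fun _ => z) + D ≤ D + (K + 1) * e + D :=
          add_le_add (SimpleGraph.edist_triangle.trans (add_le_add hfiber hlift)) le_rfl
      _ = (K + 1) * e + 2 * (D : ℕ∞) := by ring
      _ ≤ (K + 1) * e + (K + 1) * D := by gcongr
      _ = (K + 1) * (e + D) := by ring
      _ ≤ (K + 1) * (2 * D * (K + 1) ^ n) := by gcongr; exact edist_const_hub_add_le hz hK n _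
      _ = 2 * D * (K + 1) ^ (n + 1) := by ring

theorem dist_le_of_isHub [Fintype S] {z : S} {K : ℕ} (hz : IsHub F z K) (hK : 1 ≤ K)
    (n : ℕ) (w v : Word S n) :
    (replGraph F n).dist w v ≤ 4 * gdiam (replGraph F 1) * (K + 1) ^ n := by
  have hw := edist_const_hub_add_le hz hK n w
  have hv := edist_const_hub_add_le hz hK n v
  rw [SimpleGraph.edist_comm] at hv
  refine ENat.toNat_le_of_le_natCast ?_
  calc (replGraph F n).edist w v ≤ _ := SimpleGraph.edist_triangle
    _ ≤ 2 * gdiam (replGraph F 1) * ((K : ℕ∞) + 1) ^ n +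
        2 * gdiam (replGraph F 1) * ((K : ℕ∞) + 1) ^ n :=
      add_le_add (le_self_add.trans hw) (le_self_add.trans hv)
    _ = _ := by push_cast; ring

end ReplacementGraph

section Cubical

variable {d L s : ℕ} (cub : CubicalIGS d L s)

def axisSym (j : Fin d) (k : Fin L) : cub.Symb :=
  ⟨(fun i => if i = j then k else ⟨0, k.pos⟩, ⟨0, cub.hs⟩),
    cub.C1 _ ⟨j, fun i hi => Or.inl (by simp [hi]), rfl⟩⟩

def origin : cub.Symb :=
  ⟨(fun _ => ⟨0, by have := cub.hL; omega⟩, ⟨0, cub.hs⟩),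
    cub.C1 _ ⟨⟨0, cub.hd⟩, fun _ _ => Or.inl rfl, rfl⟩⟩

theorem axisSym_zero (j : Fin d) (h : 0 < L) : axisSym cub j ⟨0, h⟩ = origin cub := by
  ext i <;> simp [axisSym, origin]

theorem onAxis_axisSym (j : Fin d) (k : Fin L) : onAxis j (axisSym cub j k).1 :=
  ⟨fun i hi => Or.inl (by simp [axisSym, hi]), rfl⟩

theorem sys_E_axisSym (j : Fin d) (k : ℕ) (hk : k + 1 < L) :
    cub.sys.E (axisSym cub j ⟨k, by omega⟩) (axisSym cub j ⟨k + 1, hk⟩) :=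
  cub.C2 j _ _ (onAxis_axisSym cub j _) (onAxis_axisSym cub j _)
    ⟨fun i hi => by simp [axisSym, hi], by simp [axisSym]⟩

theorem sys_glue_axisSym_origin (j : Fin d) :
    cub.sys.glue j (axisSym cub j ⟨L - 1, by have := cub.hL; omega⟩) (origin cub) := by
  rw [← axisSym_zero cub j (by have := cub.hL; omega)]
  exact cub.C3 j _ _ (onAxis_axisSym cub j _) (onAxis_axisSym cub j _)
    ⟨fun i hi => by simp [axisSym, hi], by simp [axisSym], by simp [axisSym], rfl⟩

variable [Nonempty (Fin d)]

theorem edist_origin_axisSym_le (j : Fin d) (k : ℕ) (hk : k < L) :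
    (replGraph cub.sys 1).edist (fun _ => origin cub)
      (fun _ => axisSym cub j ⟨k, hk⟩) ≤ k := by
  induction k with
  | zero => simp [axisSym_zero]
  | succ k ih =>
    have hstep : (replGraph cub.sys 1).edist (fun _ => axisSym cub j ⟨k, by omega⟩)
        (fun _ => axisSym cub j ⟨k + 1, hk⟩) ≤ 1 :=
      SimpleGraph.edist_le_one_iff_adj_or_eq.2 <| Or.inl <|
        (replGraph_one_adj_iff cub.sys).2 (Or.inl (sys_E_axisSym cub j k hk))
    calc _ ≤ _ := SimpleGraph.edist_triangle
      _ ≤ (k : ℕ∞) + 1 := add_le_add (ih (by omega)) hstep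
      _ = ((k + 1 : ℕ) : ℕ∞) := by push_cast; rfl

theorem isHub_origin : IsHub cub.sys (origin cub) (L - 1) := fun j =>
  ⟨_, sys_glue_axisSym_origin cub j, edist_origin_axisSym_le cub j _ _⟩

end Cubical

theorem statement12_general (d L s : ℕ) (cub : CubicalIGS d L s) (m : ℕ) :
    letI : Nonempty (Fin d) := ⟨⟨0, cub.hd⟩⟩
    letI : Fintype ↥cub.Symb := (Set.toFinite cub.Symb).fintype
    (∀ w v : Word (↥cub.Symb) m,
      (replGraph cub.sys m).dist w v ≤ 4 * gdiam (replGraph cub.sys 1) * L ^ m) ∧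
    gdiam (replGraph cub.sys m) ≤ 4 * gdiam (replGraph cub.sys 1) * L ^ m := by
  let _ : Nonempty (Fin d) := ⟨⟨0, cub.hd⟩⟩
  let _ : Fintype ↥cub.Symb := (Set.toFinite cub.Symb).fintype
  have hL := cub.hL
  have key : ∀ w v : Word (↥cub.Symb) m,
      (replGraph cub.sys m).dist w v ≤ 4 * gdiam (replGraph cub.sys 1) * L ^ m := by
    intro w v
    have h := dist_le_of_isHub (isHub_origin cub) (by omega) m w v
    rwa [Nat.sub_add_cancel (by omega)] at h
  exact ⟨key, Finset.sup_le fun pr _ => key pr.1 pr.2⟩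

/-- In a cubical iterated graph system, for all `m ≥ 1` and all words
`w, v ∈ W_m`, `d_{G_m}(w,v) ≤ 4 · diam(G₁) · L*^m`; in particular
`diam(G_m) ≤ 4 · diam(G₁) · L*^m`. -/
theorem statement12 (d L s : ℕ) (cub : CubicalIGS d L s) (m : ℕ) (hm : 1 ≤ m) :
    letI : Nonempty (Fin d) := ⟨⟨0, cub.hd⟩⟩
    letI : Fintype ↥cub.Symb := (Set.toFinite cub.Symb).fintype
    (∀ w v : Word (↥cub.Symb) m,
      (replGraph cub.sys m).dist w v ≤ 4 * gdiam (replGraph cub.sys 1) * L ^ m) ∧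
    gdiam (replGraph cub.sys m) ≤ 4 * gdiam (replGraph cub.sys 1) * L ^ m :=
  statement12_general d L s cub m

end IGSP
end
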